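/- Let O_F be an F-order ideal with each O_i nonempty, and let t·f_i be an F-term. Then the O_F-index k = ind_{O_F}(t f_i) is the smallest natural number such that there exists a factorization t = t′·t″ in T^n with deg(t′) = k and t″·f_i ∈ O_F. -/

import Mathlib

open MvPolynomial

/-- An order ideal: a finite set of terms (exponent vectors), closed under divisors. -/
def IsOrderIdeal {n : ℕ} (O : Finset (Fin n →₀ ℕ)) : Prop :=
  ∀ t ∈ O, ∀ s : Fin n →₀ ℕ, s ≤ t → s ∈ O

/-- The degree of a term (exponent vector). -/
def termDeg {n : ℕ} (t : Fin n →₀ ℕ) : ℕ := t.sum fun _ e => e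

/-- The `F`-order ideal `O_F = O_1·f_1 ∪ ⋯ ∪ O_m·f_m`, encoded as the set of pairs
`(t, i)` with `t ∈ O_i`; a pair `(t, i)` represents the `F`-term `t·f_i`. -/
def fPairs {n m : ℕ} (O : Fin m → Finset (Fin n →₀ ℕ)) : Set ((Fin n →₀ ℕ) × Fin m) :=
  {p | p.1 ∈ O p.2}

/-- The border `∂S = (x_1·S ∪ ⋯ ∪ x_n·S) \ S` of a set `S` of `F`-terms. -/
def borderP {n m : ℕ} (S : Set ((Fin n →₀ ℕ) × Fin m)) : Set ((Fin n →₀ ℕ) × Fin m) :=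
  (⋃ j : Fin n, (fun p => (p.1 + Finsupp.single j 1, p.2)) '' S) \ S

/-- The `k`-th border closure: `∂̄⁰S = S` and `∂̄^{k+1}S = ∂̄^k S ∪ ∂(∂̄^k S)`. -/
def borderClosureP {n m : ℕ} (S : Set ((Fin n →₀ ℕ) × Fin m)) :
    ℕ → Set ((Fin n →₀ ℕ) × Fin m)
  | 0 => S
  | k + 1 => borderClosureP S k ∪ borderP (borderClosureP S k)

/-- The `O_F`-index of an `F`-term: `ind_{O_F}(t·f_i) = min {k | t·f_i ∈ ∂̄^k O_F}`. -/
noncomputable def indOF {n m : ℕ} (S : Set ((Fin n →₀ ℕ) × Fin m)) (p : (Fin n →₀ ℕ) × Fin m) : ℕ :=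
  sInf {k | p ∈ borderClosureP S k}

/-
Each step of the border closure multiplies by one variable, so `t·f_i ∈ ∂̄^k O_F` exactly when
`t = t'·t''` with `t''·f_i ∈ O_F` and `deg t' ≤ k`. Hence the indices `k` with `t·f_i ∈ ∂̄^k O_F`
are the upward closure of the degrees of such cofactors `t'`, and both sets have the same least
element. The set of cofactors is nonempty because `1 ∈ O_i`.
-/

lemma termDeg_eq_degree {n : ℕ} (t : Fin n →₀ ℕ) : termDeg t = t.degree := rfl

lemma Nat.isLeast_sInf_of_mem_iff_exists_le {A B : Set ℕ} (hA : A.Nonempty)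
    (hB : ∀ k, k ∈ B ↔ ∃ a ∈ A, a ≤ k) : IsLeast A (sInf B) := by
  have hleast : IsLeast B (sInf A) :=
    ⟨(hB _).2 ⟨_, Nat.sInf_mem hA, le_rfl⟩,
      fun k hk => by obtain ⟨a, ha, hak⟩ := (hB k).1 hk; exact (Nat.sInf_le ha).trans hak⟩
  rw [hleast.csInf_eq]
  exact isLeast_csInf hA

lemma Finsupp.exists_eq_add_single_one_of_degree_eq_succ {σ : Type*} {s : σ →₀ ℕ} {d : ℕ}
    (hs : s.degree = d + 1) : ∃ s' j, s = s' + Finsupp.single j 1 ∧ s'.degree = d := by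
  obtain ⟨j, hj⟩ : ∃ j, s j ≠ 0 := by
    by_contra! h
    simp [show s = 0 from Finsupp.ext h] at hs
  have hle : Finsupp.single j 1 ≤ s := Finsupp.single_le_iff.2 (Nat.one_le_iff_ne_zero.2 hj)
  refine ⟨s - Finsupp.single j 1, j, (tsub_add_cancel_of_le hle).symm, ?_⟩
  have := congrArg Finsupp.degree (tsub_add_cancel_of_le hle)
  rw [map_add, Finsupp.degree_single] at this
  omega

section BorderClosure

variable {n m : ℕ} {S : Set ((Fin n →₀ ℕ) × Fin m)}

lemma borderClosureP_mono : Monotone (borderClosureP S) :=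
  monotone_nat_of_le_succ fun _ _ hp => Or.inl hp

lemma add_single_mem_borderClosureP_succ {k : ℕ} {t : Fin n →₀ ℕ} {i : Fin m}
    (h : (t, i) ∈ borderClosureP S k) (j : Fin n) :
    (t + Finsupp.single j 1, i) ∈ borderClosureP S (k + 1) := by
  by_cases hk : (t + Finsupp.single j 1, i) ∈ borderClosureP S k
  · exact Or.inl hk
  · exact Or.inr ⟨Set.mem_iUnion.2 ⟨j, (t, i), h, rfl⟩, hk⟩

lemma add_mem_borderClosureP_add_degree {k : ℕ} {t : Fin n →₀ ℕ} {i : Fin m}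
    (h : (t, i) ∈ borderClosureP S k) (s : Fin n →₀ ℕ) :
    (t + s, i) ∈ borderClosureP S (k + s.degree) := by
  induction hd : s.degree generalizing s with
  | zero => simpa [(Finsupp.degree_eq_zero_iff s).1 hd] using h
  | succ d ih =>
    obtain ⟨s', j, rfl, hs'⟩ := Finsupp.exists_eq_add_single_one_of_degree_eq_succ hd
    simpa [add_assoc] using add_single_mem_borderClosureP_succ (ih s' hs') j

theorem mem_borderClosureP_iff {k : ℕ} {t : Fin n →₀ ℕ} {i : Fin m} :
    (t, i) ∈ borderClosureP S k ↔
      ∃ t' t'', t = t' + t'' ∧ t'.degree ≤ k ∧ (t'', i) ∈ S := by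
  constructor
  · induction k generalizing t with
    | zero => exact fun h => ⟨0, t, by simp, by simp, h⟩
    | succ k ih =>
      rintro (h | ⟨hmem, -⟩)
      · obtain ⟨t', t'', rfl, hdeg, hS⟩ := ih h
        exact ⟨t', t'', rfl, hdeg.trans k.le_succ, hS⟩
      · obtain ⟨j, ⟨q, i'⟩, hq, hqt⟩ := Set.mem_iUnion.1 hmem
        obtain ⟨rfl, rfl⟩ := Prod.ext_iff.1 hqt
        obtain ⟨t', t'', rfl, hdeg, hS⟩ := ih hq
        refine ⟨t' + Finsupp.single j 1, t'', add_right_comm _ _ _, ?_, hS⟩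
        rw [map_add, Finsupp.degree_single]
        omega
  · rintro ⟨t', t'', rfl, hdeg, hS⟩
    have := add_mem_borderClosureP_add_degree (k := 0) hS t'
    rw [zero_add, add_comm t''] at this
    exact borderClosureP_mono hdeg this

end BorderClosure

theorem stmt_9_general {n m : ℕ}
    (O : Fin m → Finset (Fin n →₀ ℕ)) (hO : ∀ i, IsOrderIdeal (O i))
    (hne : ∀ i, (O i).Nonempty)
    (t : Fin n →₀ ℕ) (i : Fin m) :
    IsLeast {k | ∃ t' t'' : Fin n →₀ ℕ,
        t = t' + t'' ∧ termDeg t' = k ∧ (t'', i) ∈ fPairs O}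
      (indOF (fPairs O) (t, i)) := by
  have hzero : (0 : Fin n →₀ ℕ) ∈ O i := by
    obtain ⟨u, hu⟩ := hne i
    exact hO i u hu 0 zero_le
  refine Nat.isLeast_sInf_of_mem_iff_exists_le ⟨_, t, 0, (add_zero t).symm, rfl, hzero⟩ fun k => ?_
  simp only [Set.mem_ofPred_eq, mem_borderClosureP_iff, termDeg_eq_degree]
  constructor
  · rintro ⟨t', t'', ht, hdeg, hS⟩
    exact ⟨_, ⟨t', t'', ht, rfl, hS⟩, hdeg⟩
  · rintro ⟨_, ⟨t', t'', ht, rfl, hS⟩, hdeg⟩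
    exact ⟨t', t'', ht, hdeg, hS⟩

/-- The `O_F`-index of an `F`-term `t·f_i` is the smallest natural number `k` such that
there is a factorization `t = t'·t''` with `deg(t') = k` and `t''·f_i ∈ O_F`. -/
theorem stmt_9 {K : Type*} [Field K] {n m : ℕ}
    (f : Fin m → MvPolynomial (Fin n) K) (hf : ∀ i, f i ≠ 0)
    (O : Fin m → Finset (Fin n →₀ ℕ)) (hO : ∀ i, IsOrderIdeal (O i))
    (hne : ∀ i, (O i).Nonempty)
    (t : Fin n →₀ ℕ) (i : Fin m) :
    IsLeast {k | ∃ t' t'' : Fin n →₀ ℕ,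
        t = t' + t'' ∧ termDeg t' = k ∧ (t'', i) ∈ fPairs O}
      (indOF (fPairs O) (t, i)) :=
  stmt_9_general O hO hne t i
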